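/- For every fixed x with 0 < x ≤ 1/2, the function y ↦ K_μ(x, y) is lower semicontinuous on (0, min(2x, 1−x)], continuous on (0, x], and concave on (x, min(2x, 1−x)] (when this interval is nonempty). -/

import Mathlib

open MeasureTheory Set Filter Topology
open scoped ENNReal

/-- The measure on `ℝ` with density `f` with respect to Lebesgue measure. -/
noncomputable def densMeasure (f : ℝ → ℝ) : Measure ℝ :=
  MeasureTheory.volume.withDensity (fun x => ENNReal.ofReal (f x))

/-- The essential boundary of a set `Ω ⊆ ℝ`: points whose Lebesgue density in `Ω`
is neither `0` nor `1`. -/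
def essBoundary (Ω : Set ℝ) : Set ℝ :=
  {x : ℝ |
    ¬ Tendsto (fun ρ : ℝ => (MeasureTheory.volume (Ω ∩ Ioo (x - ρ) (x + ρ))).toReal / (2 * ρ))
        (nhdsWithin 0 (Ioi 0)) (nhds 0) ∧
    ¬ Tendsto (fun ρ : ℝ => (MeasureTheory.volume (Ω ∩ Ioo (x - ρ) (x + ρ))).toReal / (2 * ρ))
        (nhdsWithin 0 (Ioi 0)) (nhds 1)}

/-- The `μ`-perimeter of `Ω`: the integral of the density `f` over the essential boundary
of `Ω` with respect to the 0-dimensional Hausdorff (counting) measure. -/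
noncomputable def perim (f : ℝ → ℝ) (Ω : Set ℝ) : ℝ≥0∞ :=
  ∫⁻ x in essBoundary Ω, ENNReal.ofReal (f x) ∂Measure.count

/-- The setup of the paper: an even, log-concave probability density `f` on `ℝ`,
positive exactly on the symmetric interval `(-b₀, b₀)` (with `b₀ ∈ (0, ∞]`),
together with the inverse `Finv` of the cumulative distribution function on `(0,1)`
and the isoperimetric function `J` given by `J r = f (Finv r)` on `(0,1)`,
`J 0 = J 1 = 0`. -/
structure LogConcaveSetup where
  f : ℝ → ℝ
  b₀ : ℝ≥0∞
  hb₀ : 0 < b₀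
  hf_meas : Measurable f
  hf_pos : ∀ x : ℝ, 0 < f x ↔ ENNReal.ofReal |x| < b₀
  hf_even : ∀ x : ℝ, f (-x) = f x
  hf_logConcave : ConcaveOn ℝ {x : ℝ | 0 < f x} (fun x => Real.log (f x))
  hprob : IsProbabilityMeasure (densMeasure f)
  Finv : ℝ → ℝ
  hFinv : ∀ r ∈ Ioo (0:ℝ) 1, (densMeasure f (Iic (Finv r))).toReal = r
  J : ℝ → ℝ
  hJ : ∀ r ∈ Ioo (0:ℝ) 1, J r = f (Finv r)
  hJ0 : J 0 = 0
  hJ1 : J 1 = 0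

/-- The asymmetry `λ(Ω)`: the minimum of the `μ`-measures of the symmetric differences
of `Ω` with the two half-lines of the same `μ`-measure as `Ω`. -/
noncomputable def asym (S : LogConcaveSetup) (Ω : Set ℝ) : ℝ :=
  min ((densMeasure S.f (symmDiff Ω (Iio (S.Finv ((densMeasure S.f Ω).toReal))))).toReal)
      ((densMeasure S.f (symmDiff Ω (Ioi (S.Finv (1 - (densMeasure S.f Ω).toReal))))).toReal)

/-- The isoperimetric deficit function `K_μ`. -/
noncomputable def Kfun (J : ℝ → ℝ) (x y : ℝ) : ℝ :=
  if y ≤ x then J (x - y / 2) - J x + J (y / 2) else J (x + y / 2) - J x + J (y / 2)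

/-- The convenient lower bound `L_μ` on the isoperimetric deficit function. -/
noncomputable def Lfun (J : ℝ → ℝ) (x y : ℝ) : ℝ :=
  if y ≤ x then J (y / 2) - (y / (2 * x)) * J x else J (y / 2) - (y / (2 * (1 - x))) * J x

/-!
Log-concavity of `f` gives `f x * f (y + h) ≤ f (x + h) * f y` for `x ≤ y` and `h ≥ 0`. Integrating
it over `x ∈ [F⁻¹ p, F⁻¹ q]`, `y ∈ [F⁻¹ q, F⁻¹ r]` is exactly the slope inequality making
`p ↦ F (F⁻¹ p + h)` concave on `(0, 1)`, so `J = f ∘ F⁻¹`, the pointwise limit of the concave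
functions `(F (F⁻¹ p + h) - p) / h` as `h → 0⁺`, is concave; evenness of `f` gives
`J (1 - r) = J r`.

For fixed `x`, both branches `y ↦ J (x ∓ y / 2) - J x + J (y / 2)` of `K_μ(x, ·)` are then concave,
hence continuous, on the open set where they are defined. `K_μ` follows the left branch on `(0, x]`
and the right one beyond `x`, and the left branch lies below the right one because `J s ≤ J t` for
`t ∈ [s, 1 - s]`; so the only jump of `K_μ(x, ·)`, at `y = x`, is upwards, which is lower
semicontinuity.
-/

open Real

theorem ConcaveOn.add_le_add_shift {φ : ℝ → ℝ} {s : Set ℝ} (hφ : ConcaveOn ℝ s φ) {x y h : ℝ}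
    (hx : x ∈ s) (hyh : y + h ∈ s) (hxy : x ≤ y) (hh : 0 ≤ h) :
    φ x + φ (y + h) ≤ φ (x + h) + φ y := by
  rcases (show x ≤ y + h by linarith).eq_or_lt with hL | hL
  · obtain rfl : h = 0 := by linarith
    obtain rfl : y = x := by linarith
    rw [add_zero]
  -- `x + h` and `y` are the combinations of `x` and `y + h` with weights `(1 - t, t)` and `(t, 1 - t)`
  set t := h / (y + h - x)
  have ht0 : 0 ≤ t := div_nonneg hh (by linarith)
  have ht1 : t ≤ 1 := (div_le_one (by linarith)).2 (by linarith)
  have e1 : (1 - t) • x + t • (y + h) = x + h := by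
    simp only [smul_eq_mul, t]; field_simp; ring
  have e2 : t • x + (1 - t) • (y + h) = y := by
    simp only [smul_eq_mul, t]; field_simp; ring
  have c1 := hφ.2 hx hyh (sub_nonneg.2 ht1) ht0 (by ring)
  have c2 := hφ.2 hx hyh ht0 (sub_nonneg.2 ht1) (by ring)
  rw [e1] at c1
  rw [e2] at c2
  simp only [smul_eq_mul] at c1 c2
  linarith

theorem mul_le_mul_shift_of_concaveOn_log {g : ℝ → ℝ} (hg0 : ∀ x, 0 ≤ g x)
    (hg : ConcaveOn ℝ {x | 0 < g x} fun x => log (g x)) {x y h : ℝ} (hxy : x ≤ y) (hh : 0 ≤ h) :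
    g x * g (y + h) ≤ g (x + h) * g y := by
  rcases (hg0 x).eq_or_lt with hx | hx
  · rw [← hx, zero_mul]; exact mul_nonneg (hg0 _) (hg0 _)
  rcases (hg0 (y + h)).eq_or_lt with hyh | hyh
  · rw [← hyh, mul_zero]; exact mul_nonneg (hg0 _) (hg0 _)
  have hxh : 0 < g (x + h) := hg.1.ordConnected.out hx hyh ⟨by linarith, by linarith⟩
  have hy : 0 < g y := hg.1.ordConnected.out hx hyh ⟨hxy, by linarith⟩
  have hlog := hg.add_le_add_shift hx hyh hxy hh
  rw [← log_mul hx.ne' hyh.ne', ← log_mul hxh.ne' hy.ne'] at hlog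
  exact (log_le_log_iff (by positivity) (by positivity)).1 hlog

theorem integral_shift_mul_le_of_concaveOn_log {g : ℝ → ℝ} (hg0 : ∀ x, 0 ≤ g x)
    (hg : ConcaveOn ℝ {x | 0 < g x} fun x => log (g x)) (hgi : Integrable g)
    {a b c h : ℝ} (hab : a ≤ b) (hbc : b ≤ c) (hh : 0 ≤ h) :
    (∫ y in b..c, g (y + h)) * (∫ x in a..b, g x) ≤
      (∫ y in b..c, g y) * ∫ x in a..b, g (x + h) := by
  have hgh : Integrable fun x => g (x + h) := hgi.comp_add_right h
  have inner : ∀ y ∈ Icc b c, g (y + h) * ∫ x in a..b, g x ≤ g y * ∫ x in a..b, g (x + h) := by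
    intro y hy
    rw [← intervalIntegral.integral_const_mul, ← intervalIntegral.integral_const_mul]
    refine intervalIntegral.integral_mono_on hab (hgi.intervalIntegrable.const_mul _)
      (hgh.intervalIntegrable.const_mul _) fun x hx => ?_
    rw [mul_comm, mul_comm (g y)]
    exact mul_le_mul_shift_of_concaveOn_log hg0 hg (hx.2.trans hy.1) hh
  rw [← intervalIntegral.integral_mul_const, ← intervalIntegral.integral_mul_const]
  exact intervalIntegral.integral_mono_on hbc (hgh.intervalIntegrable.mul_const _)
    (hgi.intervalIntegrable.mul_const _) inner

theorem ConcaveOn.of_tendsto {E ι : Type*} [AddCommGroup E] [Module ℝ E] {l : Filter ι} [l.NeBot]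
    {F : ι → E → ℝ} {φ : E → ℝ} {s : Set E} (hF : ∀ᶠ i in l, ConcaveOn ℝ s (F i))
    (hlim : ∀ x ∈ s, Tendsto (fun i => F i x) l (𝓝 (φ x))) : ConcaveOn ℝ s φ := by
  obtain ⟨i, hi⟩ := hF.exists
  refine ⟨hi.1, fun x hx y hy a b ha hb hab => ?_⟩
  exact le_of_tendsto_of_tendsto (((hlim x hx).const_smul a).add ((hlim y hy).const_smul b))
    (hlim _ (hi.1 hx hy ha hb hab)) (hF.mono fun j hj => hj.2 hx hy ha hb hab)

theorem ConcaveOn.comp_add_mul {φ : ℝ → ℝ} {s : Set ℝ} (hφ : ConcaveOn ℝ s φ) (a c : ℝ) :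
    ConcaveOn ℝ {y | a + c * y ∈ s} fun y => φ (a + c * y) :=
  hφ.comp_affineMap (AffineMap.const ℝ ℝ a + c • AffineMap.id ℝ ℝ)

theorem ConcaveOn.le_of_apply_one_sub_eq {J : ℝ → ℝ} (hJ : ConcaveOn ℝ (Ioo 0 1) J)
    (hsymm : ∀ r ∈ Ioo (0 : ℝ) 1, J (1 - r) = J r) {s t : ℝ} (hs : s ∈ Ioo (0 : ℝ) 1)
    (hst : s ≤ t) (hts : t ≤ 1 - s) : J s ≤ J t := by
  have hs' : 1 - s ∈ Ioo (0 : ℝ) 1 := ⟨by linarith [hs.2], by linarith [hs.1]⟩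
  have := hJ.ge_on_segment hs hs' (by rw [segment_eq_Icc (by linarith)]; exact ⟨hst, hts⟩)
  rwa [hsymm s hs, min_self] at this

theorem lowerSemicontinuousOn_Ioc_of_le_continuousOn {f g : ℝ → ℝ} {a b c : ℝ} (hab : a ≤ b)
    (hbc : b ≤ c) (hf : ContinuousOn f (Ioc a b)) (hg : ContinuousOn g (Ioc a c))
    (hfg : EqOn f g (Ioc b c)) (hle : ∀ y ∈ Ioc a b, f y ≤ g y) :
    LowerSemicontinuousOn f (Ioc a c) := by
  intro y hy d hd
  rw [← Ioc_union_Ioc_eq_Ioc hab hbc, nhdsWithin_union, eventually_sup]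
  constructor
  · rcases le_or_gt y b with hyb | hyb
    · exact hf y ⟨hy.1, hyb⟩ (Ioi_mem_nhds hd)
    · exact mem_nhdsWithin.2 ⟨Ioi b, isOpen_Ioi, hyb, fun z hz => absurd hz.2.2 hz.1.not_ge⟩
  · have hgy : d < g y := by
      rcases le_or_gt y b with hyb | hyb
      · exact hd.trans_le (hle y ⟨hy.1, hyb⟩)
      · rwa [← hfg ⟨hyb, hy.2⟩]
    filter_upwards [((hg y hy).mono (Ioc_subset_Ioc_left hab)) (Ioi_mem_nhds hgy),
      self_mem_nhdsWithin] with z hz hzs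
    rwa [hfg hzs]

section Kfun

variable {J : ℝ → ℝ} {x : ℝ}

noncomputable def kBranch (J : ℝ → ℝ) (x c y : ℝ) : ℝ := J (x + c * y) - J x + J (y / 2)

lemma Kfun_of_le {y : ℝ} (h : y ≤ x) : Kfun J x y = kBranch J x (-1 / 2) y := by
  rw [Kfun, if_pos h, kBranch]; ring_nf

lemma Kfun_of_lt {y : ℝ} (h : x < y) : Kfun J x y = kBranch J x (1 / 2) y := by
  rw [Kfun, if_neg h.not_ge, kBranch]; ring_nf

lemma concaveOn_kBranch (hJ : ConcaveOn ℝ (Ioo 0 1) J) (x c : ℝ) :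
    ConcaveOn ℝ ({y | x + c * y ∈ Ioo 0 1} ∩ Ioo 0 2) (kBranch J x c) := by
  have hconv : Convex ℝ ({y | x + c * y ∈ Ioo 0 1} ∩ Ioo 0 2) :=
    ((hJ.comp_add_mul x c).1).inter (convex_Ioo 0 2)
  have hhalf : ConcaveOn ℝ (Ioo 0 2) fun y => J (0 + 1 / 2 * y) :=
    (hJ.comp_add_mul 0 (1 / 2)).subset (fun y hy => ⟨by linarith [hy.1], by linarith [hy.2]⟩)
      (convex_Ioo 0 2)
  refine ((((hJ.comp_add_mul x c).subset inter_subset_left hconv).add_const (-J x)).add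
    (hhalf.subset inter_subset_right hconv)).congr fun y _ => ?_
  simp only [Pi.add_apply, kBranch]
  ring_nf

lemma continuousOn_kBranch (hJ : ConcaveOn ℝ (Ioo 0 1) J) (x c : ℝ) :
    ContinuousOn (kBranch J x c) ({y | x + c * y ∈ Ioo 0 1} ∩ Ioo 0 2) :=
  (concaveOn_kBranch hJ x c).continuousOn ((isOpen_Ioo.preimage (by fun_prop)).inter isOpen_Ioo)

lemma continuousOn_Kfun (hJ : ConcaveOn ℝ (Ioo 0 1) J) (hx : x ≤ 1 / 2) :
    ContinuousOn (Kfun J x) (Ioc 0 x) :=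
  ((continuousOn_kBranch hJ x (-1 / 2)).mono fun y hy =>
    ⟨⟨by linarith [hy.1, hy.2], by linarith [hy.1]⟩, hy.1, by linarith [hy.2]⟩).congr
    fun _ hy => Kfun_of_le hy.2

lemma concaveOn_Kfun (hJ : ConcaveOn ℝ (Ioo 0 1) J) (hx0 : 0 < x) :
    ConcaveOn ℝ (Ioc x (min (2 * x) (1 - x))) (Kfun J x) := by
  refine ((concaveOn_kBranch hJ x (1 / 2)).subset (fun y hy => ?_) (convex_Ioc _ _)).congr
    fun _ hy => (Kfun_of_lt hy.1).symm
  have := hy.2.trans (min_le_right _ _)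
  exact ⟨⟨by linarith [hy.1], by linarith [hy.1]⟩, by linarith [hy.1], by linarith⟩

lemma lowerSemicontinuousOn_Kfun (hJ : ConcaveOn ℝ (Ioo 0 1) J)
    (hsymm : ∀ r ∈ Ioo (0 : ℝ) 1, J (1 - r) = J r) (hx0 : 0 < x) (hx : x ≤ 1 / 2) :
    LowerSemicontinuousOn (Kfun J x) (Ioc 0 (min (2 * x) (1 - x))) := by
  refine lowerSemicontinuousOn_Ioc_of_le_continuousOn hx0.le (le_min (by linarith) (by linarith))
    (continuousOn_Kfun hJ hx) ((continuousOn_kBranch hJ x (1 / 2)).mono fun y hy => ?_)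
    (fun y hy => Kfun_of_lt hy.1) fun y hy => ?_
  · have := hy.2.trans (min_le_right _ _)
    exact ⟨⟨by linarith [hy.1], by linarith⟩, hy.1, by linarith⟩
  · have := hJ.le_of_apply_one_sub_eq hsymm (s := x + -1 / 2 * y) (t := x + 1 / 2 * y)
      ⟨by linarith [hy.1, hy.2], by linarith [hy.1]⟩ (by linarith [hy.1]) (by linarith)
    rw [Kfun_of_le hy.2, kBranch, kBranch]
    linarith

end Kfun

instance (f : ℝ → ℝ) : NullSingletonClass (densMeasure f) :=
  ⟨fun x => withDensity_absolutelyContinuous _ _ (measure_singleton x)⟩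

instance (S : LogConcaveSetup) : IsProbabilityMeasure (densMeasure S.f) := S.hprob

namespace LogConcaveSetup

variable (S : LogConcaveSetup)

/-- The density as a nonnegative function; `S.f` itself is constrained only where it is
positive, since `densMeasure` reads it through `ENNReal.ofReal`. -/
noncomputable def density (t : ℝ) : ℝ := max (S.f t) 0

lemma density_nonneg (t : ℝ) : 0 ≤ S.density t := le_max_right _ _

lemma measurable_density : Measurable S.density := S.hf_meas.max measurable_const

lemma density_pos_iff {t : ℝ} : 0 < S.density t ↔ 0 < S.f t := by
  simp [density]

lemma density_eq {t : ℝ} (h : 0 < S.f t) : S.density t = S.f t := max_eq_left h.le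

lemma ofReal_density (t : ℝ) : ENNReal.ofReal (S.density t) = ENNReal.ofReal (S.f t) := by
  rw [density, ENNReal.ofReal_max, ENNReal.ofReal_zero, max_eq_left zero_le]

lemma concaveOn_log_density : ConcaveOn ℝ {t | 0 < S.density t} fun t => log (S.density t) := by
  simp only [density_pos_iff]
  exact S.hf_logConcave.congr fun t ht => by rw [S.density_eq ht]

lemma isOpen_setOf_f_pos : IsOpen {t | 0 < S.f t} := by
  simp only [S.hf_pos]
  exact isOpen_lt (ENNReal.continuous_ofReal.comp continuous_abs) continuous_const

lemma continuousAt_density {t : ℝ} (ht : 0 < S.f t) : ContinuousAt S.density t := by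
  have hlog := S.hf_logConcave.continuousOn S.isOpen_setOf_f_pos
  have hf : ContinuousOn S.f {t | 0 < S.f t} :=
    (continuous_exp.comp_continuousOn hlog).congr fun t ht => (exp_log ht).symm
  exact (hf.continuousAt (S.isOpen_setOf_f_pos.mem_nhds ht)).max continuousAt_const

lemma integrable_density : Integrable S.density := by
  refine ⟨S.measurable_density.aestronglyMeasurable, ?_⟩
  rw [hasFiniteIntegral_iff_ofReal (Eventually.of_forall S.density_nonneg)]
  simp only [ofReal_density]
  rw [← setLIntegral_univ, ← withDensity_apply _ MeasurableSet.univ]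
  exact measure_lt_top (densMeasure S.f) univ

noncomputable def cdf (t : ℝ) : ℝ := (densMeasure S.f).real (Iic t)

lemma cdf_sub_cdf (a b : ℝ) : S.cdf b - S.cdf a = ∫ t in a..b, S.density t := by
  wlog hab : a ≤ b generalizing a b
  · rw [intervalIntegral.integral_symm, ← this b a (le_of_not_ge hab)]
    ring
  have hIoc : (densMeasure S.f).real (Ioc a b) = ∫ t in a..b, S.density t := by
    rw [intervalIntegral.integral_of_le hab, measureReal_def, densMeasure,
      withDensity_apply _ measurableSet_Ioc, integral_eq_lintegral_of_nonneg_ae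
        (Eventually.of_forall S.density_nonneg) S.measurable_density.aestronglyMeasurable]
    simp only [ofReal_density]
  rw [cdf, cdf, ← Iic_union_Ioc_eq_Iic hab, measureReal_union (Iic_disjoint_Ioc le_rfl)
    measurableSet_Ioc, hIoc]
  ring

lemma cdf_strictMonoOn : StrictMonoOn S.cdf {t | 0 < S.f t} := by
  intro a ha b hb hab
  have hpos : 0 < ∫ t in a..b, S.density t :=
    intervalIntegral.intervalIntegral_pos_of_pos_on S.integrable_density.intervalIntegrable
      (fun t ht => S.density_pos_iff.2 (S.hf_logConcave.1.ordConnected.out ha hb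
        ⟨ht.1.le, ht.2.le⟩)) hab
  linarith [S.cdf_sub_cdf a b]

lemma monotone_cdf : Monotone S.cdf := fun _ _ hab =>
  measureReal_mono (Iic_subset_Iic.2 hab)

lemma cdf_Finv {r : ℝ} (hr : r ∈ Ioo (0 : ℝ) 1) : S.cdf (S.Finv r) = r := S.hFinv r hr

lemma densMeasure_neg_preimage {s : Set ℝ} (hs : MeasurableSet s) :
    densMeasure S.f (Neg.neg ⁻¹' s) = densMeasure S.f s := by
  rw [densMeasure, withDensity_apply _ (hs.preimage measurable_neg), withDensity_apply _ hs,
    ← (Measure.measurePreserving_neg volume).setLIntegral_comp_preimage hs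
      S.hf_meas.ennreal_ofReal]
  simp only [S.hf_even]

lemma cdf_neg (c : ℝ) : S.cdf (-c) = 1 - S.cdf c := by
  have hIic : Iic (-c) = Neg.neg ⁻¹' Ici c := by ext; simp
  rw [cdf, cdf, measureReal_def, hIic, S.densMeasure_neg_preimage measurableSet_Ici,
    ← measureReal_def, ← measureReal_congr Ioi_ae_eq_Ici, ← compl_Iic,
    probReal_compl_eq_one_sub measurableSet_Iic]

lemma cdf_eq_one_of_not_pos {c : ℝ} (hc : 0 ≤ c) (hfc : ¬ 0 < S.f c) : S.cdf c = 1 := by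
  -- the support of `f` is a symmetric interval, so it misses `Ioi c` together with `c`
  have hzero : densMeasure S.f (Ioi c) = 0 := by
    rw [densMeasure, withDensity_apply _ measurableSet_Ioi,
      setLIntegral_eq_zero_iff measurableSet_Ioi S.hf_meas.ennreal_ofReal]
    filter_upwards with t (ht : c < t)
    refine ENNReal.ofReal_eq_zero.2 (not_lt.1 fun hft => hfc ?_)
    have hfnt : 0 < S.f (-t) := by rwa [S.hf_even]
    exact S.hf_logConcave.1.ordConnected.out hfnt hft ⟨by linarith, ht.le⟩
  rw [cdf, ← compl_Ioi, probReal_compl_eq_one_sub measurableSet_Ioi, measureReal_def, hzero]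
  simp

lemma f_Finv_pos {r : ℝ} (hr : r ∈ Ioo (0 : ℝ) 1) : 0 < S.f (S.Finv r) := by
  by_contra hfr
  rcases le_total 0 (S.Finv r) with hr0 | hr0
  · have := S.cdf_eq_one_of_not_pos hr0 hfr
    linarith [S.cdf_Finv hr, hr.2]
  · have := S.cdf_eq_one_of_not_pos (neg_nonneg.2 hr0) (by rwa [S.hf_even])
    linarith [S.cdf_neg (S.Finv r), S.cdf_Finv hr, hr.1]

lemma Finv_one_sub {r : ℝ} (hr : r ∈ Ioo (0 : ℝ) 1) : S.Finv (1 - r) = -S.Finv r := by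
  have hr' : 1 - r ∈ Ioo (0 : ℝ) 1 := ⟨by linarith [hr.2], by linarith [hr.1]⟩
  refine S.cdf_strictMonoOn.injOn (S.f_Finv_pos hr') ?_ ?_
  · show 0 < S.f (-S.Finv r)
    rw [S.hf_even]; exact S.f_Finv_pos hr
  · rw [S.cdf_neg, S.cdf_Finv hr, S.cdf_Finv hr']

lemma J_one_sub {r : ℝ} (hr : r ∈ Ioo (0 : ℝ) 1) : S.J (1 - r) = S.J r := by
  have hr' : 1 - r ∈ Ioo (0 : ℝ) 1 := ⟨by linarith [hr.2], by linarith [hr.1]⟩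
  rw [S.hJ _ hr', S.hJ _ hr, S.Finv_one_sub hr, S.hf_even]

lemma monotoneOn_Finv : MonotoneOn S.Finv (Ioo 0 1) := by
  intro p hp q hq hpq
  by_contra! hlt
  have := S.monotone_cdf hlt.le
  rw [S.cdf_Finv hp, S.cdf_Finv hq] at this
  obtain rfl := le_antisymm hpq this
  exact lt_irrefl _ hlt

lemma concaveOn_cdf_Finv_add {h : ℝ} (hh : 0 ≤ h) :
    ConcaveOn ℝ (Ioo 0 1) fun p => S.cdf (S.Finv p + h) := by
  refine concaveOn_of_slope_anti_adjacent (convex_Ioo 0 1) fun {p q r} hp hr hpq hqr => ?_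
  have hq : q ∈ Ioo (0 : ℝ) 1 := ⟨hp.1.trans hpq, hqr.trans hr.2⟩
  have shift (u v : ℝ) :
      S.cdf (v + h) - S.cdf (u + h) = ∫ t in u..v, S.density (t + h) := by
    rw [S.cdf_sub_cdf, intervalIntegral.integral_comp_add_right]
  have key := integral_shift_mul_le_of_concaveOn_log S.density_nonneg S.concaveOn_log_density
    S.integrable_density (S.monotoneOn_Finv hp hq hpq.le) (S.monotoneOn_Finv hq hr hqr.le) hh
  rw [← shift, ← shift, ← S.cdf_sub_cdf, ← S.cdf_sub_cdf, S.cdf_Finv hp, S.cdf_Finv hq,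
    S.cdf_Finv hr] at key
  rw [div_le_div_iff₀ (by linarith) (by linarith)]
  linarith

lemma hasDerivAt_cdf {a : ℝ} (ha : 0 < S.f a) : HasDerivAt S.cdf (S.f a) a := by
  have hcdf : S.cdf = fun u => S.cdf 0 + ∫ t in 0..u, S.density t := funext fun u => by
    rw [← S.cdf_sub_cdf]; ring
  rw [hcdf, ← S.density_eq ha]
  exact (intervalIntegral.integral_hasDerivAt_right S.integrable_density.intervalIntegrable
    S.measurable_density.stronglyMeasurable.stronglyMeasurableAtFilter
    (S.continuousAt_density ha)).const_add _

lemma tendsto_slope_cdf_Finv {r : ℝ} (hr : r ∈ Ioo (0 : ℝ) 1) :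
    Tendsto (fun h => h⁻¹ * (S.cdf (S.Finv r + h) - r)) (𝓝[>] 0) (𝓝 (S.J r)) := by
  rw [S.hJ r hr]
  simpa only [S.cdf_Finv hr, smul_eq_mul] using
    (S.hasDerivAt_cdf (S.f_Finv_pos hr)).tendsto_slope_zero_right

lemma concaveOn_J : ConcaveOn ℝ (Ioo 0 1) S.J := by
  refine ConcaveOn.of_tendsto (l := 𝓝[>] 0) ?_ fun r hr => S.tendsto_slope_cdf_Finv hr
  filter_upwards [self_mem_nhdsWithin] with h (hh : 0 < h)
  exact ((S.concaveOn_cdf_Finv_add hh.le).sub (convexOn_id (convex_Ioo 0 1))).smul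
    (inv_nonneg.2 hh.le)

end LogConcaveSetup

/-- For fixed `0 < x ≤ 1/2`, the isoperimetric deficit function `y ↦ K_μ(x, y)` is lower
semicontinuous on `(0, min (2x) (1-x)]`, continuous on `(0, x]`, and concave on
`(x, min (2x) (1-x)]`. -/
theorem Kfun_regularity (S : LogConcaveSetup) (x : ℝ) (hx0 : 0 < x) (hx : x ≤ 1 / 2) :
    LowerSemicontinuousOn (fun y => Kfun S.J x y) (Ioc (0:ℝ) (min (2 * x) (1 - x))) ∧
    ContinuousOn (fun y => Kfun S.J x y) (Ioc (0:ℝ) x) ∧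
    ConcaveOn ℝ (Ioc x (min (2 * x) (1 - x))) (fun y => Kfun S.J x y) :=
  ⟨lowerSemicontinuousOn_Kfun S.concaveOn_J (fun _ => S.J_one_sub) hx0 hx,
    continuousOn_Kfun S.concaveOn_J hx, concaveOn_Kfun S.concaveOn_J hx0⟩
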